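/- Let C be an abelian category with enough projectives, A the heart category of complexes [A \to B \to C] (first map injective, exact at the middle), and A^0 its subcategory of short exact sequences. For X in C, choose a surjection d : Q \to X with Q projective and set P^0_X = [Ker d \to Q \xrightarrow{d} X]. Then P^0_X is a projective object of A^0 and for every V in A^0 there is a natural isomorphism Hom_{A^0}(P^0_X, V) \cong Hom_A(P_X, V). -/

import Mathlib

open CategoryTheory Limits

namespace ARHeart

variable (C : Type*) [Category C] [Abelian C]

/-- Objects of the heart `𝒜`: complexes `[A ⟶ B ⟶ Z]` in degrees `-2, -1, 0`
with the first map a monomorphism and `Ker g = Im f`. -/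
structure Obj : Type _ where
  A : C
  B : C
  Z : C
  f : A ⟶ B
  g : B ⟶ Z
  w : f ≫ g = 0
  mono : Mono f
  exact : (ShortComplex.mk f g w).Exact

variable {C}

/-- Chain maps between heart objects. -/
@[ext]
structure Hom (V W : Obj C) where
  a : V.A ⟶ W.A
  b : V.B ⟶ W.B
  c : V.Z ⟶ W.Z
  comm₁ : V.f ≫ b = a ≫ W.f
  comm₂ : V.g ≫ c = b ≫ W.g

namespace Hom

variable {U V W : Obj C}

instance : Zero (Hom V W) := ⟨⟨0, 0, 0, by simp, by simp⟩⟩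
instance : Add (Hom V W) :=
  ⟨fun φ ψ => ⟨φ.a + ψ.a, φ.b + ψ.b, φ.c + ψ.c,
    by simp [Preadditive.comp_add, Preadditive.add_comp, φ.comm₁, ψ.comm₁],
    by simp [Preadditive.comp_add, Preadditive.add_comp, φ.comm₂, ψ.comm₂]⟩⟩
instance : Neg (Hom V W) :=
  ⟨fun φ => ⟨-φ.a, -φ.b, -φ.c,
    by simp [φ.comm₁], by simp [φ.comm₂]⟩⟩
instance : Sub (Hom V W) :=
  ⟨fun φ ψ => ⟨φ.a - ψ.a, φ.b - ψ.b, φ.c - ψ.c,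
    by simp [Preadditive.comp_sub, Preadditive.sub_comp, φ.comm₁, ψ.comm₁],
    by simp [Preadditive.comp_sub, Preadditive.sub_comp, φ.comm₂, ψ.comm₂]⟩⟩
instance : SMul ℕ (Hom V W) :=
  ⟨fun n φ => ⟨n • φ.a, n • φ.b, n • φ.c,
    by simp [φ.comm₁], by simp [φ.comm₂]⟩⟩
instance : SMul ℤ (Hom V W) :=
  ⟨fun n φ => ⟨n • φ.a, n • φ.b, n • φ.c,
    by simp [φ.comm₁], by simp [φ.comm₂]⟩⟩

@[simp] lemma add_a (φ ψ : Hom V W) : (φ + ψ).a = φ.a + ψ.a := rfl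
@[simp] lemma add_b (φ ψ : Hom V W) : (φ + ψ).b = φ.b + ψ.b := rfl
@[simp] lemma add_c (φ ψ : Hom V W) : (φ + ψ).c = φ.c + ψ.c := rfl
@[simp] lemma sub_a (φ ψ : Hom V W) : (φ - ψ).a = φ.a - ψ.a := rfl
@[simp] lemma sub_b (φ ψ : Hom V W) : (φ - ψ).b = φ.b - ψ.b := rfl
@[simp] lemma sub_c (φ ψ : Hom V W) : (φ - ψ).c = φ.c - ψ.c := rfl
@[simp] lemma neg_a (φ : Hom V W) : (-φ).a = -φ.a := rfl
@[simp] lemma neg_b (φ : Hom V W) : (-φ).b = -φ.b := rfl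
@[simp] lemma neg_c (φ : Hom V W) : (-φ).c = -φ.c := rfl
@[simp] lemma zero_a : (0 : Hom V W).a = 0 := rfl
@[simp] lemma zero_b : (0 : Hom V W).b = 0 := rfl
@[simp] lemma zero_c : (0 : Hom V W).c = 0 := rfl

instance : AddCommGroup (Hom V W) :=
  Function.Injective.addCommGroup
    (fun φ => (φ.a, φ.b, φ.c))
    (fun φ ψ h => by
      ext <;> simp only [Prod.mk.injEq] at h <;> tauto)
    rfl (fun _ _ => rfl) (fun _ => rfl) (fun _ _ => rfl) (fun _ _ => rfl) (fun _ _ => rfl)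

/-- Identity chain map. -/
def id (V : Obj C) : Hom V V := ⟨𝟙 _, 𝟙 _, 𝟙 _, by simp, by simp⟩

/-- Composition of chain maps. -/
def comp (φ : Hom U V) (ψ : Hom V W) : Hom U W :=
  ⟨φ.a ≫ ψ.a, φ.b ≫ ψ.b, φ.c ≫ ψ.c,
    by rw [← Category.assoc, φ.comm₁, Category.assoc, ψ.comm₁, Category.assoc],
    by rw [← Category.assoc, φ.comm₂, Category.assoc, ψ.comm₂, Category.assoc]⟩

@[simp] lemma comp_a (φ : Hom U V) (ψ : Hom V W) : (φ.comp ψ).a = φ.a ≫ ψ.a := rfl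
@[simp] lemma comp_b (φ : Hom U V) (ψ : Hom V W) : (φ.comp ψ).b = φ.b ≫ ψ.b := rfl
@[simp] lemma comp_c (φ : Hom U V) (ψ : Hom V W) : (φ.comp ψ).c = φ.c ≫ ψ.c := rfl

lemma sub_comp (φ φ' : Hom U V) (ψ : Hom V W) :
    (φ - φ').comp ψ = φ.comp ψ - φ'.comp ψ := by
  ext <;> simp [Preadditive.sub_comp]

lemma comp_sub (φ : Hom U V) (ψ ψ' : Hom V W) :
    φ.comp (ψ - ψ') = φ.comp ψ - φ.comp ψ' := by
  ext <;> simp [Preadditive.comp_sub]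

lemma add_comp (φ φ' : Hom U V) (ψ : Hom V W) :
    (φ + φ').comp ψ = φ.comp ψ + φ'.comp ψ := by
  ext <;> simp [Preadditive.add_comp]

lemma comp_add (φ : Hom U V) (ψ ψ' : Hom V W) :
    φ.comp (ψ + ψ') = φ.comp ψ + φ.comp ψ' := by
  ext <;> simp [Preadditive.comp_add]

end Hom

/-- The subgroup of chain maps homotopic to zero. -/
def nullHomotopic (V W : Obj C) : AddSubgroup (Hom V W) where
  carrier := {χ | ∃ (s₁ : V.B ⟶ W.A) (s₀ : V.Z ⟶ W.B),
    χ.a = V.f ≫ s₁ ∧ χ.b = V.g ≫ s₀ + s₁ ≫ W.f ∧ χ.c = s₀ ≫ W.g}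
  add_mem' := by
    rintro χ χ' ⟨s₁, s₀, h1, h2, h3⟩ ⟨t₁, t₀, h1', h2', h3'⟩
    exact ⟨s₁ + t₁, s₀ + t₀, by
      simp [h1, h1', Preadditive.comp_add], by
      simp only [Hom.add_b, h2, h2', Preadditive.comp_add, Preadditive.add_comp]
      abel, by simp [h3, h3', Preadditive.add_comp]⟩
  zero_mem' := ⟨0, 0, by simp, by simp, by simp⟩
  neg_mem' := by
    rintro χ ⟨s₁, s₀, h1, h2, h3⟩
    exact ⟨-s₁, -s₀, by simp [h1], by simp [h2]; abel, by simp [h3]⟩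

lemma comp_null {U V W : Obj C} (χ : Hom U V) (ψ : Hom V W)
    (h : χ ∈ nullHomotopic U V) : χ.comp ψ ∈ nullHomotopic U W := by
  obtain ⟨s₁, s₀, h1, h2, h3⟩ := h
  refine ⟨s₁ ≫ ψ.a, s₀ ≫ ψ.b, ?_, ?_, ?_⟩
  · simp [h1]
  · simp only [Hom.comp_b, h2, Preadditive.add_comp, Category.assoc, ψ.comm₁]
  · simp only [Hom.comp_c, h3, Category.assoc, ψ.comm₂]

lemma null_comp {U V W : Obj C} (φ : Hom U V) (χ : Hom V W)
    (h : χ ∈ nullHomotopic V W) : φ.comp χ ∈ nullHomotopic U W := by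
  obtain ⟨s₁, s₀, h1, h2, h3⟩ := h
  refine ⟨φ.b ≫ s₁, φ.c ≫ s₀, ?_, ?_, ?_⟩
  · simp only [Hom.comp_a, h1, ← Category.assoc, φ.comm₁]
  · simp only [Hom.comp_b, h2, Preadditive.comp_add, ← Category.assoc, φ.comm₂]
  · simp [h3]

instance instCategory : Category (Obj C) where
  Hom V W := Hom V W ⧸ nullHomotopic V W
  id V := QuotientAddGroup.mk (Hom.id V)
  comp := Quotient.map₂ Hom.comp (by
    intro φ φ' hφ ψ ψ' hψ
    replace hφ := QuotientAddGroup.leftRel_apply.mp hφ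
    replace hψ := QuotientAddGroup.leftRel_apply.mp hψ
    refine QuotientAddGroup.leftRel_apply.mpr ?_
    have : -φ.comp ψ + φ'.comp ψ' = (-φ + φ').comp ψ' + φ.comp (-ψ + ψ') := by
      refine Hom.ext ?_ ?_ ?_ <;>
        simp [Hom.comp, Preadditive.add_comp, Preadditive.comp_add,
          Preadditive.neg_comp, Preadditive.comp_neg] <;> abel
    rw [this]
    exact AddSubgroup.add_mem _ (comp_null _ _ hφ) (null_comp _ _ hψ))
  id_comp := by
    rintro V W ⟨φ⟩
    exact congrArg (QuotientAddGroup.mk)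
      (Hom.ext (by simp [Hom.comp, Hom.id]) (by simp [Hom.comp, Hom.id])
        (by simp [Hom.comp, Hom.id]))
  comp_id := by
    rintro V W ⟨φ⟩
    exact congrArg (QuotientAddGroup.mk)
      (Hom.ext (by simp [Hom.comp, Hom.id]) (by simp [Hom.comp, Hom.id])
        (by simp [Hom.comp, Hom.id]))
  assoc := by
    rintro U V W X ⟨φ⟩ ⟨ψ⟩ ⟨ρ⟩
    exact congrArg (QuotientAddGroup.mk)
      (Hom.ext (by simp [Hom.comp]) (by simp [Hom.comp]) (by simp [Hom.comp]))

/-- The homotopy class of a chain map, as a morphism in the heart. -/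
def mkHom {V W : Obj C} (φ : Hom V W) : V ⟶ W := QuotientAddGroup.mk φ

lemma mkHom_surjective {V W : Obj C} : Function.Surjective (mkHom (V := V) (W := W)) :=
  fun q => Quotient.inductionOn q (fun φ => ⟨φ, rfl⟩)

@[simp] lemma mkHom_comp {U V W : Obj C} (φ : Hom U V) (ψ : Hom V W) :
    mkHom φ ≫ mkHom ψ = mkHom (φ.comp ψ) := rfl

instance homAddCommGroup (V W : Obj C) : AddCommGroup (V ⟶ W) :=
  inferInstanceAs (AddCommGroup (Hom V W ⧸ nullHomotopic V W))

lemma mkHom_add {V W : Obj C} (φ ψ : Hom V W) :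
    (mkHom (φ + ψ) : V ⟶ W) = mkHom φ + mkHom ψ := rfl

instance : Preadditive (Obj C) where
  homGroup := homAddCommGroup
  add_comp := by
    rintro U V W ⟨φ⟩ ⟨φ'⟩ ⟨ψ⟩
    show mkHom ((φ + φ').comp ψ) = mkHom ((φ.comp ψ) + (φ'.comp ψ))
    rw [Hom.add_comp]
  comp_add := by
    rintro U V W ⟨φ⟩ ⟨ψ⟩ ⟨ψ'⟩
    show mkHom (φ.comp (ψ + ψ')) = mkHom ((φ.comp ψ) + (φ.comp ψ'))
    rw [Hom.comp_add]

open ZeroObject in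
/-- The object `P_X = [0 ⟶ 0 ⟶ X]`. -/
noncomputable def P (X : C) : Obj C where
  A := 0
  B := 0
  Z := X
  f := 0
  g := 0
  w := by simp
  mono := by infer_instance
  exact := ShortComplex.exact_of_isZero_X₂ _ (isZero_zero C)

/-- The functor `P : C ⥤ 𝒜`, `X ↦ [0 ⟶ 0 ⟶ X]`. -/
noncomputable def Pfunctor : C ⥤ Obj C where
  obj := P
  map {X Y} u := mkHom ⟨0, 0, u, by simp [P] <;> rfl, by simp [P] <;> exact (isZero_zero C).eq_of_src _ _⟩
  map_id X := congrArg QuotientAddGroup.mk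
    (Hom.ext (by simp [Hom.id, P] <;> rfl) (by simp [Hom.id, P] <;> rfl) (by simp [Hom.id, P]))
  map_comp {X Y Z} u v := congrArg QuotientAddGroup.mk
    (Hom.ext (by simp [Hom.comp]) (by simp [Hom.comp]) (by simp [Hom.comp] <;> rfl))

/-- The heart object `[Ker g ⟶ B ⟶ Z]` associated to a morphism `g : B ⟶ Z`. -/
noncomputable def kernelObj {B Z : C} (g : B ⟶ Z) : Obj C where
  A := kernel g
  B := B
  Z := Z
  f := kernel.ι g
  g := g
  w := kernel.condition g
  mono := inferInstance
  exact := ShortComplex.exact_of_f_is_kernel _ (kernelIsKernel g)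

end ARHeart

namespace ARHeart

section Aux

variable {C : Type*} [Category C] [Abelian C]

/-- If the degree-0 component of a chain map out of `kernelObj d` factors through `V.g`,
then the chain map is null-homotopic. -/
lemma null_of_c_factors {X Q : C} (d : Q ⟶ X) (V : Obj C)
    (χ : Hom (kernelObj d) V) (s₀ : X ⟶ V.B) (h : χ.c = s₀ ≫ V.g) :
    χ ∈ nullHomotopic (kernelObj d) V := by
  haveI : Mono V.f := V.mono
  let b' : Q ⟶ V.B := χ.b
  let a' : kernel d ⟶ V.A := χ.a
  have h2 : d ≫ χ.c = b' ≫ V.g := χ.comm₂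
  have h1 : kernel.ι d ≫ b' = a' ≫ V.f := χ.comm₁
  have hu : (b' - d ≫ s₀) ≫ (ShortComplex.mk V.f V.g V.w).g = 0 := by
    show (b' - d ≫ s₀) ≫ V.g = 0
    rw [Preadditive.sub_comp, Category.assoc, ← h, ← h2, sub_self]
  obtain ⟨t₁, ht⟩ := V.exact.lift' _ hu
  have ht' : t₁ ≫ V.f = b' - d ≫ s₀ := ht
  refine ⟨t₁, s₀, ?_, ?_, h⟩
  · have key : (kernel.ι d ≫ t₁) ≫ V.f = a' ≫ V.f := by
      rw [Category.assoc, ht', Preadditive.comp_sub, h1]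
      simp [kernel.condition_assoc]
    have := (cancel_mono V.f).mp key
    show χ.a = kernel.ι d ≫ t₁
    exact this.symm
  · show b' = d ≫ s₀ + t₁ ≫ V.f
    rw [ht']
    abel

/-- Any `c : X ⟶ V.Z` is the degree-0 component of a chain map `kernelObj d ⟶ V`,
provided `Q` is projective and `V.g` is epi. -/
lemma exists_chainMap {X Q : C} (d : Q ⟶ X) (hQ : Projective Q)
    (V : Obj C) (hg : Epi V.g) (c : X ⟶ V.Z) :
    ∃ χ : Hom (kernelObj d) V, χ.c = c := by
  haveI : Mono V.f := V.mono
  haveI := hQ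
  haveI := hg
  let b : Q ⟶ V.B := Projective.factorThru (d ≫ c) V.g
  have hb : b ≫ V.g = d ≫ c := Projective.factorThru_comp _ _
  have hu : (kernel.ι d ≫ b) ≫ (ShortComplex.mk V.f V.g V.w).g = 0 := by
    show (kernel.ι d ≫ b) ≫ V.g = 0
    rw [Category.assoc, hb, ← Category.assoc, kernel.condition, zero_comp]
  obtain ⟨a, ha⟩ := V.exact.lift' _ hu
  have ha' : a ≫ V.f = kernel.ι d ≫ b := ha
  exact ⟨⟨a, b, c, ha'.symm, hb.symm⟩, rfl⟩

end Aux

end ARHeart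

open CategoryTheory Limits ARHeart in
/-- let `C` have enough projectives and let `d : Q ⟶ X` be an epimorphism
with `Q` projective. Then `P⁰_X = [Ker d ⟶ Q —d→ X]` is a projective object of the
subcategory `𝒜⁰` of short exact sequences, and for every `V ∈ 𝒜⁰` the "restriction to
degree 0" map gives a natural isomorphism `Hom_{𝒜⁰}(P⁰_X, V) ≅ Hom_𝒜(P_X, V)`. -/
theorem stmt19 {C : Type*} [Category C] [Abelian C] [EnoughProjectives C]
    (X Q : C) (d : Q ⟶ X) (hQ : Projective Q) (hd : Epi d) :
    Projective (⟨ARHeart.kernelObj d, hd⟩ :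
        ObjectProperty.FullSubcategory (fun V : ARHeart.Obj C => Epi V.g)) ∧
    (∀ V : ObjectProperty.FullSubcategory (fun V : ARHeart.Obj C => Epi V.g),
      ∃ e : ((⟨ARHeart.kernelObj d, hd⟩ :
          ObjectProperty.FullSubcategory (fun V : ARHeart.Obj C => Epi V.g)) ⟶ V) ≃
          (ARHeart.P X ⟶ V.obj),
        ∀ ψ : ARHeart.Hom (ARHeart.kernelObj d) V.obj,
          e (ObjectProperty.homMk (ARHeart.mkHom ψ)) =
            ARHeart.mkHom (V := ARHeart.P X) (W := V.obj) ⟨0, 0, ψ.c, by simp [ARHeart.P] <;> exact (isZero_zero C).eq_of_src _ _, by simp [ARHeart.P] <;> exact (isZero_zero C).eq_of_src _ _⟩) := by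
  constructor
  · -- Projectivity of `P⁰_X` in `𝒜⁰`
    constructor
    intro E' W' f π hπ
    obtain ⟨p, hp⟩ := mkHom_surjective (V := E'.obj) (W := W'.obj) π.hom
    haveI hWg : Epi W'.obj.g := W'.property
    haveI hEg : Epi E'.obj.g := E'.property
    let r : E'.obj.Z ⊞ W'.obj.B ⟶ W'.obj.Z := biprod.desc p.c W'.obj.g
    have hrinr : biprod.inr ≫ r = W'.obj.g := biprod.inr_desc _ _
    have hrinl : biprod.inl ≫ r = p.c := biprod.inl_desc _ _
    haveI hre : Epi r := epi_of_epi_fac hrinr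
    let T : ObjectProperty.FullSubcategory (fun V : Obj C => Epi V.g) := ⟨kernelObj r, hre⟩
    have hwf : (W'.obj.f ≫ biprod.inr) ≫ r = 0 := by
      rw [Category.assoc, hrinr, W'.obj.w]
    let qchain : Hom W'.obj (kernelObj r) :=
      ⟨kernel.lift r _ hwf, biprod.inr, 𝟙 _,
        (kernel.lift_ι r _ hwf).symm,
        by show W'.obj.g ≫ 𝟙 _ = biprod.inr ≫ r; rw [Category.comp_id, hrinr]⟩
    have hs1cond : (p.b ≫ biprod.inr - E'.obj.g ≫ biprod.inl) ≫ r = 0 := by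
      rw [Preadditive.sub_comp, Category.assoc, Category.assoc, hrinr, hrinl, p.comm₂,
        sub_self]
    have hmem : p.comp qchain ∈ nullHomotopic E'.obj (kernelObj r) := by
      refine ⟨kernel.lift r _ hs1cond, biprod.inl, ?_, ?_, ?_⟩
      · show p.a ≫ kernel.lift r _ hwf = E'.obj.f ≫ kernel.lift r _ hs1cond
        apply (cancel_mono (kernel.ι r)).mp
        rw [Category.assoc, Category.assoc, kernel.lift_ι, kernel.lift_ι,
          Preadditive.comp_sub, ← Category.assoc E'.obj.f p.b, p.comm₁,
          ← Category.assoc E'.obj.f E'.obj.g, E'.obj.w, zero_comp, sub_zero,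
          Category.assoc]
      · show p.b ≫ biprod.inr = E'.obj.g ≫ biprod.inl + kernel.lift r _ hs1cond ≫ kernel.ι r
        rw [kernel.lift_ι]
        abel
      · show p.c ≫ 𝟙 _ = biprod.inl ≫ r
        rw [Category.comp_id, hrinl]
    have hcomp : π ≫ (show W' ⟶ T from ObjectProperty.homMk (mkHom qchain)) =
        π ≫ (show W' ⟶ T from ObjectProperty.homMk (mkHom (0 : Hom W'.obj (kernelObj r)))) := by
      apply ObjectProperty.hom_ext
      show π.hom ≫ mkHom qchain = π.hom ≫ mkHom 0
      rw [← hp]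
      show mkHom (p.comp qchain) = mkHom (p.comp 0)
      have h0 : p.comp (0 : Hom W'.obj (kernelObj r)) = 0 := by
        ext <;> simp
      rw [h0]
      exact (QuotientAddGroup.eq_zero_iff _).mpr hmem
    have hq := hπ.left_cancellation _ _ hcomp
    have hqmem : qchain ∈ nullHomotopic W'.obj (kernelObj r) :=
      (QuotientAddGroup.eq_zero_iff _).mp (congrArg InducedCategory.Hom.hom hq)
    obtain ⟨s₁, s₀, _, _, hC⟩ := hqmem
    have hC' : 𝟙 W'.obj.Z = s₀ ≫ r := hC
    obtain ⟨ψ, hψ⟩ := mkHom_surjective (V := kernelObj d) (W := W'.obj) f.hom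
    obtain ⟨χ, hχ⟩ := exists_chainMap d hQ E'.obj E'.property (ψ.c ≫ s₀ ≫ biprod.fst)
    have hdesc : r = biprod.fst ≫ p.c + biprod.snd ≫ W'.obj.g := by
      apply biprod.hom_ext' <;> simp [r]
    have key : ψ.c = (ψ.c ≫ s₀ ≫ biprod.fst) ≫ p.c + (ψ.c ≫ s₀ ≫ biprod.snd) ≫ W'.obj.g := by
      have hs₀ : ∀ t : W'.obj.Z ⟶ E'.obj.Z ⊞ W'.obj.B,
          t ≫ r = (t ≫ biprod.fst) ≫ p.c + (t ≫ biprod.snd) ≫ W'.obj.g := fun t => by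
        rw [hdesc, Preadditive.comp_add, Category.assoc, Category.assoc]
      have h1 : 𝟙 W'.obj.Z = (s₀ ≫ biprod.fst) ≫ p.c + (s₀ ≫ biprod.snd) ≫ W'.obj.g :=
        hC'.trans (hs₀ s₀)
      conv_lhs => rw [← Category.comp_id ψ.c, h1]
      simp only [Preadditive.comp_add, Category.assoc]
    refine ⟨show _ ⟶ E' from ObjectProperty.homMk (mkHom χ), ?_⟩
    apply ObjectProperty.hom_ext
    show mkHom χ ≫ π.hom = f.hom
    rw [← hp]
    show mkHom (χ.comp p) = f.hom
    rw [← hψ]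
    apply (QuotientAddGroup.eq).mpr
    apply null_of_c_factors d W'.obj _ (ψ.c ≫ s₀ ≫ biprod.snd)
    show -(χ.c ≫ p.c) + ψ.c = (ψ.c ≫ s₀ ≫ biprod.snd) ≫ W'.obj.g
    rw [hχ, neg_add_eq_iff_eq_add]
    exact key
  · -- The natural isomorphism
    intro V
    let F : (kernelObj d ⟶ V.obj) → (P X ⟶ V.obj) :=
      Quotient.lift
        (fun ψ : Hom (kernelObj d) V.obj =>
          mkHom (V := P X) (W := V.obj) ⟨0, 0, ψ.c, by simp [P] <;> exact (isZero_zero C).eq_of_src _ _, by simp [P] <;> exact (isZero_zero C).eq_of_src _ _⟩)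
        (by
          intro a b hab
          have hm := QuotientAddGroup.leftRel_apply.mp hab
          obtain ⟨s₁, s₀, _, _, h3⟩ := hm
          have h3' : -a.c + b.c = s₀ ≫ V.obj.g := h3
          apply (QuotientAddGroup.eq (s := nullHomotopic (P X) V.obj)).mpr
          refine ⟨0, s₀, ?_, ?_, ?_⟩
          · simp [P] <;> exact (isZero_zero C).eq_of_src _ _
          · simp [P] <;> exact (isZero_zero C).eq_of_src _ _
          · show -a.c + b.c = s₀ ≫ V.obj.g
            exact h3')
    have hF : Function.Bijective F := by
      constructor
      · intro x y hxy
        obtain ⟨a, rfl⟩ := mkHom_surjective x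
        obtain ⟨b, rfl⟩ := mkHom_surjective y
        have hm := (QuotientAddGroup.eq).mp hxy
        obtain ⟨s₁, s₀, _, _, h3⟩ := hm
        have h3' : -a.c + b.c = s₀ ≫ V.obj.g := h3
        apply (QuotientAddGroup.eq).mpr
        exact null_of_c_factors d V.obj _ s₀ h3'
      · intro y
        obtain ⟨φ, rfl⟩ := mkHom_surjective y
        obtain ⟨χ, hχ⟩ := exists_chainMap d hQ V.obj V.property φ.c
        refine ⟨mkHom χ, ?_⟩
        show mkHom (V := P X) (W := V.obj) ⟨0, 0, χ.c, by simp [P] <;> exact (isZero_zero C).eq_of_src _ _, by simp [P] <;> exact (isZero_zero C).eq_of_src _ _⟩ = mkHom φ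
        have hφ : φ = ⟨0, 0, χ.c, by simp [P] <;> exact (isZero_zero C).eq_of_src _ _, by simp [P] <;> exact (isZero_zero C).eq_of_src _ _⟩ := by
          refine Hom.ext ?_ ?_ hχ.symm
          · exact (isZero_zero C).eq_of_src _ _
          · exact (isZero_zero C).eq_of_src _ _
        rw [hφ]
    exact ⟨(Equiv.mk (fun g => g.hom) ObjectProperty.homMk (fun _ => rfl) (fun _ => rfl)).trans (Equiv.ofBijective F hF), fun ψ => rfl⟩
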